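/- The 18-variable quartic form F(x_1,...,x_18) = G(x_1,x_2,x_3) + G(x_4,x_5,x_6) + G(x_7,x_8,x_9) + 4G(x_10,x_11,x_12) + 4G(x_13,x_14,x_15) + 4G(x_16,x_17,x_18), where G(x,y,z) = x^4 + y^4 + z^4 - (x^2y^2 + x^2z^2 + y^2z^2) - xyz(x+y+z), has only the trivial zero over Q_2. In particular, since 18 > 4^2 = 16, this gives a counterexample to Artin's conjecture for degree 4 over Q_2. -/

import Mathlib

namespace Terj

/-- Terjanian's quartic over an arbitrary commutative ring. -/
def g {R : Type*} [CommRing R] (x y z : R) : R :=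
  x ^ 4 + y ^ 4 + z ^ 4 - (x ^ 2 * y ^ 2 + x ^ 2 * z ^ 2 + y ^ 2 * z ^ 2)
    - x * y * z * (x + y + z)

lemma key (a b c : ZMod (2^2)) :
    g a b c = 1 ∨ (g a b c = 0 ∧ ((a = 0 ∨ a = 2) ∧ (b = 0 ∨ b = 2) ∧ (c = 0 ∨ c = 2))) := by
  revert a b c; decide

lemma sum3 (u v w : ZMod (2^2)) (hu : u = 0 ∨ u = 1) (hv : v = 0 ∨ v = 1)
    (hw : w = 0 ∨ w = 1) (h : u + v + w = 0) : u = 0 ∧ v = 0 ∧ w = 0 := by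
  rcases hu with h1 | h1 <;> rcases hv with h2 | h2 <;> rcases hw with h3 | h3 <;>
    subst h1 h2 h3 <;> simp_all <;> revert h <;> decide

noncomputable def φ : ℤ_[2] →+* ZMod (2 ^ 2) := PadicInt.toZModPow 2

lemma map_g {R S : Type*} [CommRing R] [CommRing S] (f : R →+* S) (a b c : R) :
    f (g a b c) = g (f a) (f b) (f c) := by
  simp [g, map_add, map_sub, map_mul, map_pow]

lemma phi_zero_iff (a : ℤ_[2]) : φ a = 0 ↔ (2:ℤ_[2])^2 ∣ a := by
  rw [show (φ a = 0) ↔ a ∈ RingHom.ker φ from Iff.rfl, φ, PadicInt.ker_toZModPow,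
    Ideal.mem_span_singleton]
  norm_num

lemma even_of (a : ℤ_[2]) (h : φ a = 0 ∨ φ a = 2) : (2:ℤ_[2]) ∣ a := by
  rcases h with h | h
  · rcases (phi_zero_iff a).mp h with ⟨c, hc⟩
    exact ⟨2 * c, by rw [hc]; ring⟩
  · have h2 : φ (a - 2) = 0 := by rw [map_sub, h, map_ofNat]; ring
    rcases (phi_zero_iff _).mp h2 with ⟨c, hc⟩
    exact ⟨2 * c + 1, by linear_combination hc⟩

/-- The 18-variable form over the 2-adic integers. -/
noncomputable def S (y : Fin 18 → ℤ_[2]) : ℤ_[2] :=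
  g (y 0) (y 1) (y 2) + g (y 3) (y 4) (y 5) + g (y 6) (y 7) (y 8)
    + 4 * (g (y 9) (y 10) (y 11) + g (y 12) (y 13) (y 14) + g (y 15) (y 16) (y 17))

/-- From a sum of three G-values being 0 mod 4, conclude all nine variables even. -/
lemma nine_even {a b c d e f a' b' c' : ℤ_[2]}
    (h : φ (g a b c) + φ (g d e f) + φ (g a' b' c') = 0) :
    (2:ℤ_[2]) ∣ a ∧ 2 ∣ b ∧ 2 ∣ c ∧ 2 ∣ d ∧ 2 ∣ e ∧ 2 ∣ f ∧ 2 ∣ a' ∧ 2 ∣ b' ∧ 2 ∣ c' := by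
  rw [map_g, map_g, map_g] at h
  have k1 := key (φ a) (φ b) (φ c)
  have k2 := key (φ d) (φ e) (φ f)
  have k3 := key (φ a') (φ b') (φ c')
  have hz := sum3 _ _ _ (k1.symm.imp And.left id) (k2.symm.imp And.left id)
    (k3.symm.imp And.left id) h
  rcases k1 with k1 | ⟨_, ha, hb, hc⟩
  · rw [k1] at hz; exact absurd hz.1 (by decide)
  rcases k2 with k2 | ⟨_, hd, he, hf⟩
  · rw [k2] at hz; exact absurd hz.2.1 (by decide)
  rcases k3 with k3 | ⟨_, ha', hb', hc'⟩
  · rw [k3] at hz; exact absurd hz.2.2 (by decide)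
  exact ⟨even_of _ ha, even_of _ hb, even_of _ hc, even_of _ hd, even_of _ he,
    even_of _ hf, even_of _ ha', even_of _ hb', even_of _ hc'⟩

lemma step (y : Fin 18 → ℤ_[2]) (h : S y = 0) : ∀ i, (2:ℤ_[2]) ∣ y i := by
  have h4 : (φ 4 : ZMod (2^2)) = 0 := by
    rw [show (4:ℤ_[2]) = ((4:ℕ):ℤ_[2]) by norm_num, map_natCast]
    decide
  have hφ : φ (g (y 0) (y 1) (y 2)) + φ (g (y 3) (y 4) (y 5)) + φ (g (y 6) (y 7) (y 8)) = 0 := by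
    have := congrArg φ h
    rw [S, map_zero, map_add, map_add, map_add, map_mul, h4, zero_mul, add_zero] at this
    exact this
  obtain ⟨e0, e1, e2, e3, e4, e5, e6, e7, e8⟩ := nine_even hφ
  obtain ⟨z0, hz0⟩ := e0; obtain ⟨z1, hz1⟩ := e1; obtain ⟨z2, hz2⟩ := e2
  obtain ⟨z3, hz3⟩ := e3; obtain ⟨z4, hz4⟩ := e4; obtain ⟨z5, hz5⟩ := e5
  obtain ⟨z6, hz6⟩ := e6; obtain ⟨z7, hz7⟩ := e7; obtain ⟨z8, hz8⟩ := e8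
  have h2 : 4 * (g z0 z1 z2 + g z3 z4 z5 + g z6 z7 z8) +
      (g (y 9) (y 10) (y 11) + g (y 12) (y 13) (y 14) + g (y 15) (y 16) (y 17)) = 0 := by
    have h4ne : (4:ℤ_[2]) ≠ 0 := by norm_num
    apply mul_left_cancel₀ h4ne
    rw [mul_zero, ← h, S, hz0, hz1, hz2, hz3, hz4, hz5, hz6, hz7, hz8]
    simp only [g]; ring
  have hφ2 : φ (g (y 9) (y 10) (y 11)) + φ (g (y 12) (y 13) (y 14))
      + φ (g (y 15) (y 16) (y 17)) = 0 := by
    have := congrArg φ h2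
    rw [map_zero, map_add, map_mul, h4, zero_mul, zero_add, map_add, map_add] at this
    exact this
  obtain ⟨f0, f1, f2, f3, f4, f5, f6, f7, f8⟩ := nine_even hφ2
  intro i
  fin_cases i <;>
    first
      | exact ⟨z0, hz0⟩ | exact ⟨z1, hz1⟩ | exact ⟨z2, hz2⟩ | exact ⟨z3, hz3⟩
      | exact ⟨z4, hz4⟩ | exact ⟨z5, hz5⟩ | exact ⟨z6, hz6⟩ | exact ⟨z7, hz7⟩
      | exact ⟨z8, hz8⟩ | exact f0 | exact f1 | exact f2 | exact f3 | exact f4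
      | exact f5 | exact f6 | exact f7 | exact f8

lemma desc : ∀ (n : ℕ) (y : Fin 18 → ℤ_[2]), S y = 0 → ∀ i, (2:ℤ_[2])^n ∣ y i := by
  intro n
  induction n with
  | zero => intro y _ i; simp
  | succ n ih =>
    intro y h i
    choose z hz using step y h
    have hSz : S z = 0 := by
      have h16 : (2:ℤ_[2])^4 ≠ 0 := by norm_num
      apply mul_left_cancel₀ h16
      rw [mul_zero, ← h, S, S, hz 0, hz 1, hz 2, hz 3, hz 4, hz 5, hz 6, hz 7, hz 8,
        hz 9, hz 10, hz 11, hz 12, hz 13, hz 14, hz 15, hz 16, hz 17]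
      simp only [g]; ring
    rw [hz i, pow_succ, mul_comm ((2:ℤ_[2])^n) 2]
    exact mul_dvd_mul_left 2 (ih z hSz i)

lemma eq_zero_of_all_dvd (a : ℤ_[2]) (h : ∀ n : ℕ, (2:ℤ_[2])^n ∣ a) : a = 0 := by
  by_contra h0
  have hpos : 0 < ‖a‖ := norm_pos_iff.mpr h0
  obtain ⟨n, hn⟩ := exists_pow_lt_of_lt_one hpos (by norm_num : (2:ℝ)⁻¹ < 1)
  have hmem : a ∈ Ideal.span {((2:ℕ):ℤ_[2])^n} := by
    rw [Ideal.mem_span_singleton]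
    simpa using h n
  have := (PadicInt.norm_le_pow_iff_mem_span_pow a n).mpr hmem
  have h2 : ((2:ℝ)^(-(n:ℤ))) = (2:ℝ)⁻¹^n := by
    rw [zpow_neg, inv_pow, zpow_natCast]
  rw [show ((2:ℕ):ℝ) = (2:ℝ) by norm_num] at this
  rw [h2] at this
  linarith

lemma exists_bound (q : ℚ_[2]) : ∃ N : ℕ, ∀ n ≥ N, ‖(2:ℚ_[2])^n * q‖ ≤ 1 := by
  obtain ⟨k, hk⟩ := pow_unbounded_of_one_lt ‖q‖ (one_lt_two : (1:ℝ) < 2)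
  refine ⟨k, fun n hn => ?_⟩
  have hnorm2 : ‖(2:ℚ_[2])‖ = 2⁻¹ := by
    have := Padic.norm_p (p := 2)
    simpa using this
  rw [norm_mul, norm_pow, hnorm2]
  have h1 : (2:ℝ)⁻¹^n * ‖q‖ ≤ (2:ℝ)⁻¹^n * 2^k :=
    mul_le_mul_of_nonneg_left hk.le (by positivity)
  refine h1.trans ?_
  rw [inv_pow, inv_mul_le_iff₀ (by positivity), mul_one]
  exact pow_le_pow_right₀ one_le_two hn

end Terj

/-- Terjanian's quartic in three variables. -/
def terjanianG {K : Type*} [Field K] (x y z : K) : K :=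
  x ^ 4 + y ^ 4 + z ^ 4 - (x ^ 2 * y ^ 2 + x ^ 2 * z ^ 2 + y ^ 2 * z ^ 2)
    - x * y * z * (x + y + z)

/-- Terjanian's 18-variable quartic form has only the trivial zero over `ℚ_[2]`,
giving a counterexample to Artin's conjecture for degree 4. -/
theorem terjanian_counterexample (x : Fin 18 → ℚ_[2])
    (h : terjanianG (x 0) (x 1) (x 2) + terjanianG (x 3) (x 4) (x 5)
        + terjanianG (x 6) (x 7) (x 8)
        + 4 * terjanianG (x 9) (x 10) (x 11)
        + 4 * terjanianG (x 12) (x 13) (x 14)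
        + 4 * terjanianG (x 15) (x 16) (x 17) = 0) :
    x = 0 := by
  choose N hN using fun i => Terj.exists_bound (x i)
  set n := Finset.univ.sup N with hn
  have hb : ∀ i, ‖(2:ℚ_[2])^n * x i‖ ≤ 1 :=
    fun i => hN i n (Finset.le_sup (Finset.mem_univ i))
  set y : Fin 18 → ℤ_[2] := fun i => ⟨(2:ℚ_[2])^n * x i, hb i⟩ with hy
  have hyv : ∀ i, ((y i : ℤ_[2]) : ℚ_[2]) = (2:ℚ_[2])^n * x i := fun i => rfl
  have hSy : Terj.S y = 0 := by
    have hcoe : ((Terj.S y : ℤ_[2]) : ℚ_[2]) = 0 := by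
      simp only [Terj.S, Terj.g]
      push_cast
      rw [show ((4:ℤ_[2]):ℚ_[2]) = 4 by norm_cast]
      simp only [terjanianG] at h
      linear_combination ((2:ℚ_[2])^n)^4 * h
    exact PadicInt.coe_eq_zero.mp hcoe
  have hz : ∀ i, y i = 0 := fun i =>
    Terj.eq_zero_of_all_dvd _ (fun m => Terj.desc m y hSy i)
  funext i
  have : ((y i : ℤ_[2]) : ℚ_[2]) = 0 := by rw [hz i]; simp
  rw [hyv i] at this
  have h2n : ((2:ℚ_[2])^n) ≠ 0 := pow_ne_zero _ two_ne_zero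
  simpa [h2n] using mul_eq_zero.mp this
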